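/- arXiv:1206.1992 — 2 statements merged into one kernel-verified Lean document; each statement's English description precedes it below -/
import Mathlib

section
/- For every integer m ≥ 0, Σ_{l=1}^{m+1} (−1)^{l−1} (1 − 2^l) s(m+1, l) B_l / l = (−1)^m m! / 2^{m+1}, where s(m+1,l) are Stirling numbers of the first kind and B_l are Bernoulli numbers. -/
/-!
Let `L` be the linear functional on `ℚ[X]` with `L (X ^ n) = η(-n)`; formally
`L p = ∑_{k ≥ 1} (-1)^(k-1) p(k)`. Dividing `x(x-1)⋯(x-m) = ∑ s(m+1,l) x^l` by `x` shows that the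
left-hand side is `L Q_m` with `Q_m = (X-1)(X-2)⋯(X-m)`.

From `∑ B_n tⁿ/n! = t/(eᵗ-1)` the exponential generating function of `η(-n)` is `eᵗ/(1+eᵗ)`,
which amounts to the functional equation `L p + L (p(X+1)) = p(1)`. Since `Q_{m+1}(X+1)` is the
falling factorial `X(X-1)⋯(X-m) = Q_{m+1} + (m+1) Q_m` and `Q_{m+1}(1) = 0`, this gives
`L Q_{m+1} = -(m+1)/2 · L Q_m`, while `L Q_0 = η(0) = 1/2`.
-/

/-- Signed Stirling numbers of the first kind, defined by
`x(x−1)⋯(x−m) = Σ_{l=0}^{m+1} s(m+1,l) x^l`. -/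
def stirling1 : ℕ → ℕ → ℤ
  | 0, 0 => 1
  | 0, _ + 1 => 0
  | n + 1, 0 => -(n : ℤ) * stirling1 n 0
  | n + 1, k + 1 => stirling1 n k - (n : ℤ) * stirling1 n (k + 1)

open Finset Nat

section Stirling

open Polynomial

variable {R : Type*} [Ring R]

theorem coeff_descPochhammer_eq_stirling1 (n k : ℕ) :
    (descPochhammer R n).coeff k = stirling1 n k := by
  induction n generalizing k with
  | zero => cases k <;> simp [stirling1, coeff_one]
  | succ n ih =>
    rw [descPochhammer_succ_right, ← C_eq_natCast]
    cases k with
    | zero => simp [stirling1, ih, Nat.cast_comm]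
    | succ k =>
      rw [coeff_mul_X_sub_C, ih, ih, stirling1]
      push_cast
      rw [Nat.cast_comm]

theorem coeff_descPochhammer_comp_X_sub_one (m k : ℕ) :
    ((descPochhammer R m).comp (X - 1)).coeff k = stirling1 (m + 1) (k + 1) := by
  rw [← coeff_descPochhammer_eq_stirling1, descPochhammer_succ_left, coeff_X_mul]

theorem natDegree_descPochhammer_comp_X_sub_one [NoZeroDivisors R] [Nontrivial R] (m : ℕ) :
    ((descPochhammer R m).comp (X - 1)).natDegree = m := by
  rw [natDegree_comp, descPochhammer_natDegree, ← C_1, natDegree_X_sub_C, mul_one]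

end Stirling

section GeneratingFunction

open PowerSeries

/-- `η(-n)`, by `η(1-l) = (-1)^(l-1) (1-2^l) B_l / l`; this needs Mathlib's `bernoulli 1 = -1/2`. -/
def etaNeg (n : ℕ) : ℚ := (-1) ^ n * (1 - 2 ^ (n + 1)) * bernoulli (n + 1) / (n + 1)

theorem coeff_mk_div_factorial_mul_exp (f : ℕ → ℚ) (n : ℕ) :
    coeff n (mk (fun i => f i / i !) * exp ℚ) = (∑ i ∈ range (n + 1), n.choose i * f i) / n ! := by
  rw [coeff_mul, Nat.sum_antidiagonal_eq_sum_range_succ_mk, sum_div]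
  refine sum_congr rfl fun i hi => ?_
  rw [Nat.cast_choose ℚ (Nat.lt_succ_iff.mp (mem_range.mp hi))]
  simp only [coeff_mk, coeff_exp, Algebra.algebraMap_self, RingHom.id_apply]
  field_simp

theorem exp_sub_one_ne_zero : exp ℚ - 1 ≠ 0 := by
  intro h
  simpa [coeff_exp] using congrArg (coeff 1) h

theorem bernoulliPowerSeries_sub_rescale_two_mul_exp_add_one :
    (bernoulliPowerSeries ℚ - rescale 2 (bernoulliPowerSeries ℚ)) * (exp ℚ + 1) = X := by
  have hB := bernoulliPowerSeries_mul_exp_sub_one ℚ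
  have h2 : rescale 2 (bernoulliPowerSeries ℚ) * (exp ℚ ^ 2 - 1) = 2 * X := by
    simpa [exp_pow_eq_rescale_exp, rescale_X, map_ofNat] using congrArg (rescale (2 : ℚ)) hB
  refine mul_right_cancel₀ exp_sub_one_ne_zero ?_
  linear_combination (exp ℚ + 1) * hB - h2

theorem mk_etaNeg_mul_one_add_exp :
    mk (fun n => etaNeg n / (n ! : ℚ)) * (1 + exp ℚ) = exp ℚ := by
  set E := mk fun n => etaNeg n / (n ! : ℚ)
  -- `B(t) - B(2t) = t/(eᵗ+1)`, which at `-t` is `-t · eᵗ/(1+eᵗ)`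
  have hE : evalNegHom (bernoulliPowerSeries ℚ - rescale 2 (bernoulliPowerSeries ℚ)) = -(X * E) := by
    ext n
    cases n with
    | zero => simp [evalNegHom, bernoulliPowerSeries, rescale_mk]
    | succ n =>
      simp only [evalNegHom, bernoulliPowerSeries, Algebra.algebraMap_self, RingHom.id_apply, map_sub,
        map_neg, coeff_rescale, coeff_mk, coeff_succ_X_mul, E, etaNeg, factorial_succ]
      push_cast
      field_simp
      ring
  have h := congrArg evalNegHom bernoulliPowerSeries_sub_rescale_two_mul_exp_add_one
  rw [map_mul, hE, map_add, map_one, evalNegHom_X] at h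
  refine mul_left_cancel₀ (X_ne_zero (R := ℚ)) ?_
  linear_combination (-exp ℚ) * h - X * E * exp_mul_exp_neg_eq_one (A := ℚ)

theorem etaNeg_add_sum_choose_mul_etaNeg (n : ℕ) :
    etaNeg n + ∑ i ∈ range (n + 1), n.choose i * etaNeg i = 1 := by
  have h := congrArg (coeff n) mk_etaNeg_mul_one_add_exp
  rw [mul_one_add, map_add, coeff_mk_div_factorial_mul_exp, coeff_mk, coeff_exp,
    Algebra.algebraMap_self, RingHom.id_apply] at h
  field_simp at h
  exact h

end GeneratingFunction

section Functional

open Polynomial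

/-- Formally `p ↦ ∑_{k ≥ 1} (-1)^(k-1) p(k)` in the sense of Abel summation. -/
noncomputable def etaFunctional : ℚ[X] →ₗ[ℚ] ℚ :=
  lsum fun n => LinearMap.mulRight ℚ (etaNeg n)

theorem etaFunctional_monomial (n : ℕ) (a : ℚ) :
    etaFunctional (monomial n a) = a * etaNeg n := by
  simp [etaFunctional, lsum_apply]

theorem etaFunctional_X_pow (n : ℕ) : etaFunctional (X ^ n) = etaNeg n := by
  rw [← monomial_one_right_eq_X_pow, etaFunctional_monomial, one_mul]

theorem etaFunctional_eq_sum {p : ℚ[X]} {N : ℕ} (hp : p.natDegree < N) :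
    etaFunctional p = ∑ k ∈ range N, p.coeff k * etaNeg k := by
  rw [etaFunctional, lsum_apply, sum_over_range' _ (by simp) N hp]
  rfl

theorem etaFunctional_add_etaFunctional_comp_X_add_one (p : ℚ[X]) :
    etaFunctional p + etaFunctional (p.comp (X + 1)) = p.eval 1 := by
  induction p using Polynomial.induction_on' with
  | add p q hp hq => simp only [add_comp, map_add, eval_add]; linarith
  | monomial n a =>
    have hpow : etaFunctional ((X + 1) ^ n) = ∑ i ∈ range (n + 1), n.choose i * etaNeg i := by
      rw [add_pow, map_sum]
      refine sum_congr rfl fun i _ => ?_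
      rw [one_pow, mul_one, ← C_eq_natCast, mul_comm, ← smul_eq_C_mul, map_smul,
        etaFunctional_X_pow, smul_eq_mul]
    rw [← C_mul_X_pow_eq_monomial, mul_comp, C_comp, X_pow_comp, ← smul_eq_C_mul, ← smul_eq_C_mul,
      map_smul, map_smul, hpow, etaFunctional_X_pow, smul_eq_mul, smul_eq_mul, ← mul_add,
      etaNeg_add_sum_choose_mul_etaNeg]
    simp

theorem etaFunctional_descPochhammer_comp_X_sub_one (m : ℕ) :
    etaFunctional ((descPochhammer ℚ m).comp (X - 1)) = (-1) ^ m * m ! / 2 ^ (m + 1) := by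
  induction m with
  | zero =>
    rw [descPochhammer_zero, one_comp, ← pow_zero X, etaFunctional_X_pow]
    norm_num [etaNeg]
  | succ m ih =>
    have hshift :=
      etaFunctional_add_etaFunctional_comp_X_add_one ((descPochhammer ℚ (m + 1)).comp (X - 1))
    rw [comp_assoc, sub_comp, X_comp, one_comp, add_sub_cancel_right, comp_X, eval_comp,
      eval_sub, eval_X, eval_one, sub_self, descPochhammer_ne_zero_eval_zero _ (succ_ne_zero m)]
      at hshift
    have hrec := congrArg etaFunctional (descPochhammer_succ_comp_X_sub_one (R := ℚ) m)
    rw [map_sub, smul_eq_mul, show (m + 1 : ℚ[X]) = C ((m : ℚ) + 1) by simp, ← smul_eq_C_mul,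
      map_smul, ih, smul_eq_mul] at hrec
    rw [Nat.factorial_succ]
    push_cast
    linear_combination (hrec + hshift) / 2

end Functional

theorem stmt_13 (m : ℕ) :
    ∑ l ∈ Finset.Icc 1 (m + 1),
        (-1 : ℚ) ^ (l - 1) * (1 - 2 ^ l) * (stirling1 (m + 1) l : ℚ) * bernoulli l / l
      = (-1 : ℚ) ^ m * (Nat.factorial m) / 2 ^ (m + 1) := by
  rw [← etaFunctional_descPochhammer_comp_X_sub_one,
    etaFunctional_eq_sum ((natDegree_descPochhammer_comp_X_sub_one m).trans_lt (lt_add_one m)),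
    ← Ico_add_one_right_eq_Icc, sum_Ico_eq_sum_range, add_tsub_cancel_right]
  refine sum_congr rfl fun k _ => ?_
  rw [add_comm 1 k, coeff_descPochhammer_comp_X_sub_one, etaNeg, add_tsub_cancel_right]
  push_cast
  ring
end

section
/- For Re(s) > 1, Hasse's formula holds: ζ(s)(1 − 2^{1−s}) = Σ_{m=0}^∞ 2^{−(m+1)} Σ_{j=0}^{m} (−1)^j C(m, j) / (j+1)^s, where the double series converges. -/
/-!
Hasse's series is the binomial mean of the alternating series `∑ (-1)^j / (j+1)^s`.
Since `∑_{m ≥ j} C(m, j) / 2^(m+1) = 1` for every `j`, the double series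
`∑_{m,j} C(m, j) / 2^(m+1) • a j` of an absolutely convergent series `∑ a j` converges
absolutely: summed over `m` first it gives `∑ a j`, summed over `j` first the binomial means.
Splitting `ζ(s)` into its even and odd terms identifies the alternating series with
`(1 - 2^(1-s)) ζ(s)`.
-/

open Finset

lemma hasSum_choose_div_two_pow (j : ℕ) :
    HasSum (fun m : ℕ => (m.choose j : ℝ) / 2 ^ (m + 1)) 1 := by
  have hgeom := (hasSum_choose_mul_geometric_of_norm_lt_one j
    (r := (2⁻¹ : ℝ)) (by norm_num)).mul_right ((2⁻¹ : ℝ) ^ (j + 1))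
  rw [show (1 - 2⁻¹ : ℝ) = 2⁻¹ by norm_num, one_div_mul_cancel (by positivity)] at hgeom
  rw [← hasSum_nat_add_iff' j]
  have hhead : ∑ m ∈ range j, (m.choose j : ℝ) / 2 ^ (m + 1) = 0 :=
    sum_eq_zero fun m hm => by rw [Nat.choose_eq_zero_of_lt (mem_range.mp hm)]; simp
  rw [hhead, sub_zero]
  refine hgeom.congr_fun fun n => ?_
  rw [div_eq_mul_inv, ← inv_pow, mul_assoc, ← pow_add]
  ring_nf

theorem HasSum.binomial_mean {E : Type*} [NormedAddCommGroup E] [NormedSpace ℝ E]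
    [CompleteSpace E] {a : ℕ → E} {A : E} (ha : HasSum a A)
    (habs : Summable fun j => ‖a j‖) :
    HasSum (fun m => ∑ j ∈ range (m + 1), ((m.choose j : ℝ) / 2 ^ (m + 1)) • a j) A := by
  set F : ℕ × ℕ → E := fun p => ((p.2.choose p.1 : ℝ) / 2 ^ (p.2 + 1)) • a p.1
  have hfiber_j (j : ℕ) : HasSum (fun m => F (j, m)) (a j) := by
    simpa using (hasSum_choose_div_two_pow j).smul_const (a j)
  have hnorm_fiber_j (j : ℕ) : HasSum (fun m => ‖F (j, m)‖) ‖a j‖ := by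
    simpa [F, norm_smul] using (hasSum_choose_div_two_pow j).mul_right ‖a j‖
  have hF : Summable F := by
    refine Summable.of_norm ((summable_prod_of_nonneg fun _ => norm_nonneg _).mpr ⟨?_, ?_⟩)
    · exact fun j => (hnorm_fiber_j j).summable
    · simpa only [fun j => (hnorm_fiber_j j).tsum_eq] using habs
  have htotal : HasSum F A := by
    have := hF.hasSum
    rwa [(this.prod_fiberwise hfiber_j).unique ha] at this
  have hfiber_m (m : ℕ) :
      HasSum (fun j => F (j, m)) (∑ j ∈ range (m + 1), ((m.choose j : ℝ) / 2 ^ (m + 1)) • a j) :=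
    hasSum_sum_of_ne_finset_zero fun j hj => by
      simp [F, Nat.choose_eq_zero_of_lt (by simpa using hj : m < j)]
  exact ((Equiv.prodComm ℕ ℕ).hasSum_iff.mpr htotal).prod_fiberwise hfiber_m

theorem HasSum.neg_one_pow_mul {R : Type*} [NormedRing R] [CompleteSpace R] {f : ℕ → R} {a b : R}
    (hf : HasSum f a) (hodd : HasSum (fun k => f (2 * k + 1)) b) :
    HasSum (fun n => (-1) ^ n * f n) (a - 2 * b) := by
  have heven : HasSum (fun k => f (2 * k)) (a - b) := by
    obtain ⟨e, he⟩ := hf.summable.comp_injective (mul_right_injective₀ two_ne_zero)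
    rwa [← (he.even_add_odd hodd).unique hf, add_sub_cancel_right]
  have h := HasSum.even_add_odd (f := fun n => (-1) ^ n * f n)
    (by simpa [pow_mul] using heven) (by simpa [pow_succ, pow_mul] using hodd.neg)
  convert h using 1
  noncomm_ring

lemma hasSum_one_div_nat_add_one_cpow {s : ℂ} (hs : 1 < s.re) :
    HasSum (fun n : ℕ => 1 / ((n : ℂ) + 1) ^ s) (riemannZeta s) := by
  rw [zeta_eq_tsum_one_div_nat_add_one_cpow hs]
  refine Summable.hasSum <| ((summable_nat_add_iff 1).mpr
    (Complex.summable_one_div_nat_cpow.mpr hs)).congr fun n => ?_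
  push_cast; rfl

lemma hasSum_one_div_two_mul_nat_add_two_cpow {s : ℂ} (hs : 1 < s.re) :
    HasSum (fun k : ℕ => 1 / (((2 * k + 1 : ℕ) : ℂ) + 1) ^ s) (2 ^ (-s) * riemannZeta s) := by
  refine ((hasSum_one_div_nat_add_one_cpow hs).mul_left (2 ^ (-s))).congr_fun fun k => ?_
  have h : ((2 * k + 1 : ℕ) : ℂ) + 1 = ((2 : ℕ) : ℂ) * ((k + 1 : ℕ) : ℂ) := by push_cast; ring
  rw [h, Complex.natCast_mul_natCast_cpow, Complex.cpow_neg]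
  push_cast
  field_simp

lemma hasSum_neg_one_pow_div_nat_add_one_cpow {s : ℂ} (hs : 1 < s.re) :
    HasSum (fun n : ℕ => (-1) ^ n / ((n : ℂ) + 1) ^ s) (riemannZeta s * (1 - 2 ^ (1 - s))) := by
  have h := (hasSum_one_div_nat_add_one_cpow hs).neg_one_pow_mul
    (hasSum_one_div_two_mul_nat_add_two_cpow hs)
  have htwo : (2 : ℂ) ^ (1 - s) = 2 * 2 ^ (-s) := by
    rw [sub_eq_add_neg, Complex.cpow_add _ _ two_ne_zero, Complex.cpow_one]
  rw [htwo, show riemannZeta s * (1 - 2 * 2 ^ (-s)) = riemannZeta s - 2 * (2 ^ (-s) * riemannZeta s)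
    by ring]
  exact h.congr_fun fun n => by ring

theorem stmt_15 (s : ℂ) (hs : 1 < s.re) :
    HasSum
      (fun m : ℕ => (1 / 2 ^ (m + 1) : ℂ) *
        ∑ j ∈ Finset.range (m + 1), (-1 : ℂ) ^ j * (Nat.choose m j) / ((j : ℂ) + 1) ^ s)
      (riemannZeta s * (1 - 2 ^ (1 - s))) := by
  have habs : Summable fun j : ℕ => ‖(-1 : ℂ) ^ j / ((j : ℂ) + 1) ^ s‖ := by
    simpa using summable_norm_iff.mpr (hasSum_one_div_nat_add_one_cpow hs).summable
  refine ((hasSum_neg_one_pow_div_nat_add_one_cpow hs).binomial_mean habs).congr_fun fun m => ?_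
  rw [mul_sum]
  refine sum_congr rfl fun j _ => ?_
  simp only [Complex.real_smul]
  push_cast
  ring
end
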